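/- arXiv:1603.03514 — 3 statements merged into one kernel-verified Lean document; each statement's English description precedes it below -/
import Mathlib

section
/- Let n, k ∈ ℕ, let A ∈ ℝ^{2n×2k} be symplectic (Aᵀ J_{2n} A = J_{2k}) with A⁺ := J_{2k}ᵀ Aᵀ J_{2n}, let z ∈ ℝ^{2k}, and let H : ℝ^{2n} → ℝ be differentiable at A z (gradients taken with respect to the Euclidean inner product). Then the reduced Hamiltonian H̃ : ℝ^{2k} → ℝ, H̃(w) := H(A w), is differentiable at z, and A⁺ · (J_{2n} ∇H(A z)) = J_{2k} ∇H̃(z); that is, the symplectic projection of the Hamiltonian vector field of H at A z equals the Hamiltonian vector field of H̃ = H∘A at z. -/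
/-!
By the chain rule `∇(H ∘ A)(z) = Aᵀ ∇H(Az)`, and since `Jᵀ = -J` and `J² = -1`,
`A⁺ J_{2n} = J_{2k}ᵀ Aᵀ J_{2n} J_{2n} = J_{2k} Aᵀ`.
-/

open Matrix

/-- The `2m × 2m` Poisson matrix `[[0, I], [-I, 0]]`, indexed by `Fin m ⊕ Fin m`. -/
noncomputable def Jmat (m : ℕ) : Matrix (Fin m ⊕ Fin m) (Fin m ⊕ Fin m) ℝ :=
  Matrix.fromBlocks 0 1 (-1) 0

theorem HasGradientAt.comp_continuousLinearMap {𝕜 E F : Type*} [RCLike 𝕜]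
    [NormedAddCommGroup E] [InnerProductSpace 𝕜 E] [CompleteSpace E]
    [NormedAddCommGroup F] [InnerProductSpace 𝕜 F] [CompleteSpace F]
    {f : F → 𝕜} {g : F} {x : E} (L : E →L[𝕜] F) (hf : HasGradientAt f g (L x)) :
    HasGradientAt (f ∘ L) (L.adjoint g) x := by
  rw [hasGradientAt_iff_hasFDerivAt] at hf ⊢
  refine (hf.comp x L.hasFDerivAt).congr_fderiv ?_
  ext v
  simp [ContinuousLinearMap.adjoint_inner_left]

theorem HasGradientAt.comp_mulVec {m n : Type*} [Fintype m] [Fintype n] [DecidableEq m]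
    [DecidableEq n] (A : Matrix m n ℝ) {f : EuclideanSpace ℝ m → ℝ} {g : EuclideanSpace ℝ m}
    {x : EuclideanSpace ℝ n} (hf : HasGradientAt f g (WithLp.toLp 2 (A *ᵥ x))) :
    HasGradientAt (fun w : EuclideanSpace ℝ n => f (WithLp.toLp 2 (A *ᵥ w)))
      (WithLp.toLp 2 (Aᵀ *ᵥ g)) x := by
  convert hf.comp_continuousLinearMap (LinearMap.toContinuousLinearMap A.toEuclideanLin) using 1
  · rfl
  rw [← LinearMap.adjoint_toContinuousLinearMap, ← toEuclideanLin_conjTranspose_eq_adjoint,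
    conjTranspose_eq_transpose_of_trivial]
  rfl

lemma Jmat_transpose (m : ℕ) : (Jmat m)ᵀ = -Jmat m := by
  simp [Jmat, fromBlocks_transpose, fromBlocks_neg]

lemma Jmat_mul_self (m : ℕ) : Jmat m * Jmat m = -1 := by
  simp [Jmat, fromBlocks_multiply, ← fromBlocks_one, fromBlocks_neg]

lemma Jmat_transpose_mul_mul_Jmat_mul_Jmat {k n : ℕ}
    (B : Matrix (Fin k ⊕ Fin k) (Fin n ⊕ Fin n) ℝ) :
    (Jmat k)ᵀ * B * Jmat n * Jmat n = Jmat k * B := by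
  rw [Matrix.mul_assoc _ (Jmat n), Jmat_mul_self, Jmat_transpose]
  simp

theorem stmt6_general (n k : ℕ) (A : Matrix (Fin n ⊕ Fin n) (Fin k ⊕ Fin k) ℝ)
    (z : EuclideanSpace ℝ (Fin k ⊕ Fin k))
    (H : EuclideanSpace ℝ (Fin n ⊕ Fin n) → ℝ)
    (hH : DifferentiableAt ℝ H (WithLp.toLp 2 (A.mulVec z))) :
    DifferentiableAt ℝ (fun w : EuclideanSpace ℝ (Fin k ⊕ Fin k) => H (WithLp.toLp 2 (A.mulVec w))) z ∧
      ((Jmat k)ᵀ * Aᵀ * Jmat n).mulVec ((Jmat n).mulVec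
          (gradient (F := EuclideanSpace ℝ (Fin n ⊕ Fin n)) H (WithLp.toLp 2 (A.mulVec z))))
        = (Jmat k).mulVec
            (gradient (F := EuclideanSpace ℝ (Fin k ⊕ Fin k))
              (fun w => H (WithLp.toLp 2 (A.mulVec w))) z) := by
  have hcomp := hH.hasGradientAt.comp_mulVec A
  refine ⟨hcomp.differentiableAt, ?_⟩
  rw [hcomp.gradient, mulVec_mulVec, Jmat_transpose_mul_mul_Jmat_mul_Jmat, mulVec_mulVec]

/-- For symplectic `A` with `A⁺ := J_{2k}ᵀ Aᵀ J_{2n}`, the reduced Hamiltonian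
`H̃ = H ∘ A` is differentiable at `z`, and the symplectic projection of the Hamiltonian
vector field of `H` at `Az` equals the Hamiltonian vector field of `H̃` at `z`:
`A⁺ (J_{2n} ∇H(Az)) = J_{2k} ∇H̃(z)`.  Gradients are taken with respect to the
Euclidean inner product. -/
theorem stmt6 (n k : ℕ) (A : Matrix (Fin n ⊕ Fin n) (Fin k ⊕ Fin k) ℝ)
    (hA : Aᵀ * Jmat n * A = Jmat k)
    (z : EuclideanSpace ℝ (Fin k ⊕ Fin k))
    (H : EuclideanSpace ℝ (Fin n ⊕ Fin n) → ℝ)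
    (hH : DifferentiableAt ℝ H (WithLp.toLp 2 (A.mulVec z))) :
    DifferentiableAt ℝ (fun w : EuclideanSpace ℝ (Fin k ⊕ Fin k) => H (WithLp.toLp 2 (A.mulVec w))) z ∧
      ((Jmat k)ᵀ * Aᵀ * Jmat n).mulVec ((Jmat n).mulVec
          (gradient (F := EuclideanSpace ℝ (Fin n ⊕ Fin n)) H (WithLp.toLp 2 (A.mulVec z))))
        = (Jmat k).mulVec
            (gradient (F := EuclideanSpace ℝ (Fin k ⊕ Fin k))
              (fun w => H (WithLp.toLp 2 (A.mulVec w))) z) :=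
  stmt6_general n k A z H hH
end

section
/- Let n, N ∈ ℕ and Q, P ∈ ℝ^{n×N}. Set S := QᵀQ + PᵀP ∈ ℝ^{N×N}, let G := [[QᵀQ, QᵀP], [PᵀQ, PᵀP]] ∈ ℝ^{2N×2N} be the Gram matrix of the vertically stacked matrix [Q; P], and let Ŝ := diag(S, S) ∈ ℝ^{2N×2N} be the block-diagonal matrix with S in both diagonal blocks. Then G is positive semidefinite and 2Ŝ − G is positive semidefinite, i.e., 2Ŝ ⪰ G ⪰ 0. -/
open Matrix
open scoped ComplexOrder

/-
With `X = [Q, P]` (snapshots side by side), `G = XᵀX ⪰ 0`. Flipping the sign of `P` gives the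
Gram matrix `[[QᵀQ, -QᵀP], [-PᵀQ, PᵀP]] ⪰ 0`, and `2Ŝ - G` is this matrix plus
`2 diag(PᵀP, QᵀQ) ⪰ 0`.
-/

namespace Matrix

variable {𝕜 m l l' : Type*} [RCLike 𝕜] [Fintype m]

theorem conjTranspose_fromCols_mul_fromCols (A : Matrix m l 𝕜) (B : Matrix m l' 𝕜) :
    (fromCols A B)ᴴ * fromCols A B = fromBlocks (Aᴴ * A) (Aᴴ * B) (Bᴴ * A) (Bᴴ * B) := by
  rw [conjTranspose_fromCols_eq_fromRows_conjTranspose, fromRows_mul_fromCols]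

variable [Fintype l] [Fintype l']

theorem posSemidef_fromBlocks_gram (A : Matrix m l 𝕜) (B : Matrix m l' 𝕜) :
    (fromBlocks (Aᴴ * A) (Aᴴ * B) (Bᴴ * A) (Bᴴ * B)).PosSemidef := by
  rw [← conjTranspose_fromCols_mul_fromCols]
  exact posSemidef_conjTranspose_mul_self _

theorem posSemidef_fromBlocks_gram_neg (A : Matrix m l 𝕜) (B : Matrix m l' 𝕜) :
    (fromBlocks (Aᴴ * A) (-(Aᴴ * B)) (-(Bᴴ * A)) (Bᴴ * B)).PosSemidef := by
  simpa using posSemidef_fromBlocks_gram A (-B)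

theorem posSemidef_fromBlocks_gram_diag {m' : Type*} [Fintype m'] (A : Matrix m l 𝕜)
    (B : Matrix m' l' 𝕜) : (fromBlocks (Aᴴ * A) 0 0 (Bᴴ * B)).PosSemidef := by
  simpa [fromBlocks_conjTranspose, fromBlocks_multiply] using
    posSemidef_conjTranspose_mul_self (fromBlocks A 0 0 B)

end Matrix

/-- For snapshot matrices `Q, P ∈ ℝ^{n×N}`, with `S := QᵀQ + PᵀP`, the Gram matrix
`G = [[QᵀQ, QᵀP], [PᵀQ, PᵀP]]` of `[Q; P]` satisfies `2·diag(S,S) ⪰ G ⪰ 0`. -/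
theorem stmt18 (n N : ℕ) (Q P : Matrix (Fin n) (Fin N) ℝ) :
    (Matrix.fromBlocks (Qᵀ * Q) (Qᵀ * P) (Pᵀ * Q) (Pᵀ * P)).PosSemidef ∧
    ((2 : ℝ) • Matrix.fromBlocks (Qᵀ * Q + Pᵀ * P) 0 0 (Qᵀ * Q + Pᵀ * P)
        - Matrix.fromBlocks (Qᵀ * Q) (Qᵀ * P) (Pᵀ * Q) (Pᵀ * P)).PosSemidef := by
  simp only [← conjTranspose_eq_transpose_of_trivial]
  refine ⟨posSemidef_fromBlocks_gram Q P, ?_⟩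
  have hdecomp : (2 : ℝ) • fromBlocks (Qᴴ * Q + Pᴴ * P) 0 0 (Qᴴ * Q + Pᴴ * P)
        - fromBlocks (Qᴴ * Q) (Qᴴ * P) (Pᴴ * Q) (Pᴴ * P)
      = fromBlocks (Qᴴ * Q) (-(Qᴴ * P)) (-(Pᴴ * Q)) (Pᴴ * P)
        + (2 : ℝ) • fromBlocks (Pᴴ * P) 0 0 (Qᴴ * Q) := by
    simp only [sub_eq_add_neg, fromBlocks_smul, fromBlocks_neg, fromBlocks_add]
    congr 1 <;> module
  rw [hdecomp]
  exact (posSemidef_fromBlocks_gram_neg Q P).add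
    ((posSemidef_fromBlocks_gram_diag P Q).smul zero_le_two)
end

section
/- Let n, k ∈ ℕ and Φ ∈ ℝ^{n×k}. The block-diagonal matrix A₁ := diag(Φ, Φ) ∈ ℝ^{2n×2k} (with Φ in both diagonal n×k blocks and zero off-diagonal blocks) is symplectic, i.e., A₁ᵀ J_{2n} A₁ = J_{2k}, if and only if Φ has orthonormal columns, i.e., Φᵀ Φ = I_k. -/
open Matrix

/-- The cotangent-lift matrix `A₁ = diag(Φ, Φ)` is symplectic iff `Φ` has orthonormal
columns, i.e. `Φᵀ Φ = I_k`. -/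
theorem stmt19 (n k : ℕ) (Φ : Matrix (Fin n) (Fin k) ℝ) :
    (Matrix.fromBlocks Φ 0 0 Φ)ᵀ * Jmat n * Matrix.fromBlocks Φ 0 0 Φ = Jmat k ↔
      Φᵀ * Φ = 1 := by
  have h : (Matrix.fromBlocks Φ 0 0 Φ)ᵀ * Jmat n * Matrix.fromBlocks Φ 0 0 Φ =
      Matrix.fromBlocks 0 (Φᵀ * Φ) (-(Φᵀ * Φ)) 0 := by
    simp [Jmat, Matrix.fromBlocks_transpose, Matrix.fromBlocks_multiply, Matrix.mul_assoc,
      Matrix.neg_mul, Matrix.mul_neg]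
  rw [h, Jmat]
  constructor
  · intro he
    have := congrArg Matrix.toBlocks₁₂ he
    simpa [Matrix.toBlocks_fromBlocks₁₂] using this
  · intro he
    rw [he]
end
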